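/- arXiv:2309.13804 — 5 statements merged into one kernel-verified Lean document; each statement's English description precedes it below -/
import Mathlib

section
/- Let q be a prime power, F_q a finite field with q elements, and n ≥ 1. For every symmetric function f : F_q^n → F_q there exists a polynomial F ∈ F_q[E_1,...,E_n] in which every variable occurs with degree strictly less than q, such that for all a ∈ F_q^n, f(a) = F(e_1(a),...,e_n(a)). (Equivalently, the substitution homomorphism Φ from polynomials in E_1,...,E_n with all variable degrees < q onto the symmetric functions S(q,n) is surjective.) -/
/-!
A symmetric function of `a` is determined by the multiset of the coordinates of `a`, and this
multiset is in turn determined by `e_1(a), …, e_n(a)`: they are, up to sign, the coefficients of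
`∏ (X - a_i)`, whose roots recover the multiset. Hence `f = g ∘ (e_1, …, e_n)` for some
`g : F_q^n → F_q`, and every function on `F_q^n` is a polynomial function with all variable
degrees `< q` (Lagrange interpolation).
-/

open MvPolynomial

theorem exists_perm_comp_eq_of_map_univ_eq {ι α : Type*} [Fintype ι] {a b : ι → α}
    (h : Finset.univ.val.map a = Finset.univ.val.map b) : ∃ σ : Equiv.Perm ι, a ∘ σ = b := by
  classical
  have hfiber (c : α) : Fintype.card {i // b i = c} = Fintype.card {i // a i = c} := by
    have := congrArg (Multiset.count c) h
    simp only [Multiset.count_map] at this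
    simp only [Fintype.card_subtype, Finset.card, Finset.filter_val, eq_comm (b := c)]
    exact this.symm
  exact ⟨Equiv.ofFiberEquiv fun c => Fintype.equivOfCardEq (hfiber c),
    funext (Equiv.ofFiberEquiv_map _)⟩

theorem Multiset.eq_of_esymm_eq {R : Type*} [CommRing R] [IsDomain R] {s t : Multiset R}
    (hcard : Multiset.card s = Multiset.card t)
    (h : ∀ k < Multiset.card s, s.esymm (k + 1) = t.esymm (k + 1)) : s = t := by
  have hprod : (s.map fun r => Polynomial.X - Polynomial.C r).prod =
      (t.map fun r => Polynomial.X - Polynomial.C r).prod := by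
    rw [Multiset.prod_X_sub_X_eq_sum_esymm, Multiset.prod_X_sub_X_eq_sum_esymm, ← hcard]
    refine Finset.sum_congr rfl fun k hk => ?_
    rcases k with _ | k
    · simp only [Multiset.esymm, Multiset.powersetCard_zero_left]
    · rw [h k (by simpa using hk)]
  simpa only [Polynomial.roots_multiset_prod_X_sub_C] using congrArg Polynomial.roots hprod

theorem MvPolynomial.eval_esymm {σ R : Type*} [CommSemiring R] [Fintype σ] (a : σ → R) (k : ℕ) :
    eval a (esymm σ R k) = (Finset.univ.val.map a).esymm k :=
  aeval_esymm_eq_multiset_esymm σ R k a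

theorem factorsThrough_esymm {n : ℕ} {R β : Type*} [CommRing R] [IsDomain R]
    (f : (Fin n → R) → β) (hf : ∀ (σ : Equiv.Perm (Fin n)) (a : Fin n → R), f (a ∘ σ) = f a) :
    f.FactorsThrough fun a (k : Fin n) => eval a (esymm (Fin n) R ((k : ℕ) + 1)) := by
  intro a b hab
  have hmap : Finset.univ.val.map a = Finset.univ.val.map b := by
    refine Multiset.eq_of_esymm_eq (by simp) fun k hk => ?_
    have := congrFun hab ⟨k, by simpa using hk⟩
    simpa only [eval_esymm] using this
  obtain ⟨σ, rfl⟩ := exists_perm_comp_eq_of_map_univ_eq hmap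
  exact (hf σ a).symm

theorem MvPolynomial.exists_degreeOf_lt_card_eval_eq {σ K : Type*} [Field K] [Fintype K]
    [Finite σ] (g : (σ → K) → K) :
    ∃ P : MvPolynomial σ K, (∀ i, P.degreeOf i < Fintype.card K) ∧ ∀ x, eval x P = g x := by
  have hg : g ∈ (restrictDegree σ K (Fintype.card K - 1)).map (evalₗ K σ) := by
    rw [map_restrict_dom_evalₗ]
    exact Submodule.mem_top
  obtain ⟨P, hP, rfl⟩ := Submodule.mem_map.1 hg
  refine ⟨P, fun i => ?_, fun x => rfl⟩
  have hdeg := degreeOf_le_iff.2 fun d hd => (mem_restrictDegree _ _ _).1 hP d hd i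
  have := Fintype.card_pos (α := K)
  omega

theorem stmt2_general (q n : ℕ)
    (F : Type) [Field F] [Fintype F] (hF : Fintype.card F = q)
    (f : (Fin n → F) → F)
    (hf : ∀ (σ : Equiv.Perm (Fin n)) (a : Fin n → F), f (a ∘ σ) = f a) :
    ∃ P : MvPolynomial (Fin n) F,
      (∀ i : Fin n, P.degreeOf i < q) ∧
      ∀ a : Fin n → F,
        f a = eval (fun k : Fin n => eval a (esymm (Fin n) F ((k : ℕ) + 1))) P := by
  obtain ⟨P, hdeg, hP⟩ := exists_degreeOf_lt_card_eval_eq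
    (Function.extend (fun a (k : Fin n) => eval a (esymm (Fin n) F ((k : ℕ) + 1))) f 0)
  refine ⟨P, hF ▸ hdeg, fun a => ?_⟩
  rw [hP, (factorsThrough_esymm f hf).extend_apply]

/-- Every symmetric function `f : F_q^n → F_q` is represented by a polynomial in the elementary
symmetric polynomials, with all variable degrees `< q`. -/
theorem stmt2 (q n : ℕ) (hq : IsPrimePow q) (hn : 1 ≤ n)
    (F : Type) [Field F] [Fintype F] (hF : Fintype.card F = q)
    (f : (Fin n → F) → F)
    (hf : ∀ (σ : Equiv.Perm (Fin n)) (a : Fin n → F), f (a ∘ σ) = f a) :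
    ∃ P : MvPolynomial (Fin n) F,
      (∀ i : Fin n, P.degreeOf i < q) ∧
      ∀ a : Fin n → F,
        f a = eval (fun k : Fin n => eval a (esymm (Fin n) F ((k : ℕ) + 1))) P :=
  stmt2_general q n F hF f hf
end

section
/- Let q be a prime power, F_q a finite field with q elements, and n ≥ 1. The set I(q,n) of polynomials P ∈ F_q[E_1,...,E_n] in which every variable occurs with degree strictly less than q and such that P(e_1(a),...,e_n(a)) = 0 for all a ∈ F_q^n, is an F_q-linear subspace of dimension q^n − C(n+q-1, n). -/
/-!
Reduced polynomials over `𝔽_q` (degree `< q` in each variable) are the same as functions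
`𝔽_qⁿ → 𝔽_q`, so the relations among `e = (e₁, …, eₙ)` form the kernel of `g ↦ g ∘ e`, whose
image has dimension the number of values of `e`. By Vieta, `e a` determines the multiset of
coordinates of `a` and conversely, so `e` takes exactly `(n + q - 1).choose n` values, the number
of size-`n` multisets in `𝔽_q`.
-/

namespace Multiset

theorem exists_univ_map_eq {α : Type*} {n : ℕ} (s : Multiset α) (hs : card s = n) :
    ∃ a : Fin n → α, Finset.univ.val.map a = s := by
  obtain ⟨l, rfl⟩ : ∃ l : List α, (l : Multiset α) = s := Quotient.exists_rep s
  rw [coe_card] at hs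
  subst hs
  exact ⟨l.get, by rw [Fin.univ_val_map, List.ofFn_get]⟩

open Polynomial in
theorem eq_of_card_eq_of_esymm_eq {R : Type*} [CommRing R] [IsDomain R] {n : ℕ}
    {s t : Multiset R} (hs : card s = n) (ht : card t = n)
    (h : ∀ k : Fin n, s.esymm (k + 1) = t.esymm (k + 1)) : s = t := by
  have hesymm : ∀ j ∈ Finset.range (n + 1), s.esymm j = t.esymm j := by
    rintro (_ | j) hj
    · simp [esymm, powersetCard_zero_left]
    · exact h ⟨j, by simp at hj; omega⟩
  have hprod : (s.map fun r => X - C r).prod = (t.map fun r => X - C r).prod := by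
    rw [prod_X_sub_X_eq_sum_esymm, prod_X_sub_X_eq_sum_esymm, hs, ht]
    exact Finset.sum_congr rfl fun j hj => by rw [hesymm j hj]
  simpa only [roots_multiset_prod_X_sub_C] using congrArg roots hprod

end Multiset

theorem Submodule.finrank_inf_ker_add_finrank_map {K V W : Type*} [DivisionRing K]
    [AddCommGroup V] [Module K V] [AddCommGroup W] [Module K W]
    (p : Submodule K V) [FiniteDimensional K p] (g : V →ₗ[K] W) :
    Module.finrank K ↥(p ⊓ LinearMap.ker g) + Module.finrank K ↥(p.map g) =
      Module.finrank K p := by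
  have hker : LinearMap.ker (g.domRestrict p) = (p ⊓ LinearMap.ker g).comap p.subtype := by
    rw [LinearMap.ker_domRestrict, comap_inf, comap_subtype_self, top_inf_eq]
  rw [← (g.domRestrict p).finrank_range_add_finrank_ker, LinearMap.range_domRestrict, hker,
    (comapSubtypeEquivOfLe inf_le_left).finrank_eq, add_comm]

theorem LinearMap.finrank_range_funLeft (K : Type*) [Field K] {α β : Type*} [Finite β]
    (f : α → β) : Module.finrank K (LinearMap.range (funLeft K K f)) = Nat.card (Set.range f) := by
  have hsplit : funLeft K K f =
      funLeft K K (Set.rangeFactorization f) ∘ₗ funLeft K K ((↑) : Set.range f → β) := rfl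
  have hsurj := funLeft_surjective_of_injective K K ((↑) : Set.range f → β)
    Subtype.val_injective
  have hinj := funLeft_injective_of_surjective K K (Set.rangeFactorization f)
    Set.rangeFactorization_surjective
  have := Fintype.ofFinite (Set.range f)
  rw [hsplit, range_comp_of_range_eq_top _ (range_eq_top.2 hsurj), finrank_range_of_inj hinj,
    Module.finrank_fintype_fun_eq_card, Nat.card_eq_fintype_card]

namespace MvPolynomial

theorem mem_restrictDegree_iff_degreeOf_le {σ R : Type*} [CommSemiring R]
    (p : MvPolynomial σ R) (n : ℕ) : p ∈ restrictDegree σ R n ↔ ∀ i, p.degreeOf i ≤ n := by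
  simp only [mem_restrictDegree, degreeOf_le_iff]
  exact ⟨fun h i m hm => h m hm i, fun h m hm i => h i m hm⟩

universe u

variable {K σ : Type u} {α : Type*} [Field K] [Fintype K]

noncomputable def reducedRelations (φ : α → σ → K) : Submodule K (MvPolynomial σ K) :=
  restrictDegree σ K (Fintype.card K - 1) ⊓ LinearMap.ker (LinearMap.funLeft K K φ ∘ₗ evalₗ K σ)

theorem mem_reducedRelations_iff {φ : α → σ → K} {P : MvPolynomial σ K} :
    P ∈ reducedRelations φ ↔
      (∀ i, P.degreeOf i < Fintype.card K) ∧ ∀ a, eval (φ a) P = 0 := by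
  have hK := Fintype.card_pos (α := K)
  simp only [reducedRelations, Submodule.mem_inf, mem_restrictDegree_iff_degreeOf_le,
    LinearMap.mem_ker]
  exact and_congr (forall_congr' fun i => by omega) _root_.funext_iff

theorem finrank_reducedRelations_add_card_range [Fintype σ] (φ : α → σ → K) :
    Module.finrank K (reducedRelations φ) + Nat.card (Set.range φ) =
      Fintype.card K ^ Fintype.card σ := by
  have : FiniteDimensional K (restrictDegree σ K (Fintype.card K - 1)) :=
    inferInstanceAs (FiniteDimensional K (R σ K))
  have hmap : (restrictDegree σ K (Fintype.card K - 1)).map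
      (LinearMap.funLeft K K φ ∘ₗ evalₗ K σ) = LinearMap.range (LinearMap.funLeft K K φ) := by
    rw [Submodule.map_comp, map_restrict_dom_evalₗ, Submodule.map_top]
  classical
  rw [← LinearMap.finrank_range_funLeft K φ, ← hmap, reducedRelations,
    Submodule.finrank_inf_ker_add_finrank_map, ← Fintype.card_fun]
  exact finrank_R σ K

noncomputable def esymmValues (n : ℕ) (R : Type*) [CommSemiring R] (a : Fin n → R) : Fin n → R :=
  fun k => eval a (esymm (Fin n) R (k + 1))

theorem card_range_esymmValues (n : ℕ) (R : Type*) [CommRing R] [IsDomain R] :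
    Nat.card (Set.range (esymmValues n R)) = Nat.card (Sym R n) := by
  let toSym : (Fin n → R) → Sym R n := fun a => ⟨Finset.univ.val.map a, by simp⟩
  let esymms : Sym R n → Fin n → R := fun s k => (s : Multiset R).esymm (k + 1)
  have hfactor : esymmValues n R = esymms ∘ toSym := by
    ext a k
    exact aeval_esymm_eq_multiset_esymm (Fin n) R (k + 1) a
  have hsurj : Function.Surjective toSym := fun s => by
    obtain ⟨a, ha⟩ := (s : Multiset R).exists_univ_map_eq s.2
    exact ⟨a, Sym.coe_injective ha⟩
  have hinj : Function.Injective esymms := fun s t hst =>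
    Sym.coe_injective (Multiset.eq_of_card_eq_of_esymm_eq s.2 t.2 (congrFun hst))
  rw [hfactor, hsurj.range_comp, Nat.card_range_of_injective hinj]

end MvPolynomial

open MvPolynomial

theorem stmt3_general (q n : ℕ)
    (F : Type) [Field F] [Fintype F] (hF : Fintype.card F = q) :
    ∃ I : Submodule F (MvPolynomial (Fin n) F),
      (∀ P : MvPolynomial (Fin n) F,
        P ∈ I ↔ (∀ i : Fin n, P.degreeOf i < q) ∧
          ∀ a : Fin n → F,
            eval (fun k : Fin n => eval a (esymm (Fin n) F ((k : ℕ) + 1))) P = 0) ∧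
      Module.finrank F I = q ^ n - (n + q - 1).choose n := by
  classical
  refine ⟨reducedRelations (esymmValues n F), fun P => ?_, ?_⟩
  · rw [mem_reducedRelations_iff, hF]
    rfl
  · have hdim := finrank_reducedRelations_add_card_range (esymmValues n F)
    rw [card_range_esymmValues, Nat.card_eq_fintype_card, Sym.card_sym_eq_choose, hF,
      Fintype.card_fin, add_comm q n] at hdim
    omega

/-- The space `I(q,n)` of algebraic relations among the elementary symmetric polynomial
functions over `F_q` (polynomials with all variable degrees `< q` vanishing on all values of
the elementary symmetric polynomials) is an `F_q`-subspace of dimension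
`q ^ n - (n + q - 1).choose n`. -/
theorem stmt3 (q n : ℕ) (hq : IsPrimePow q) (hn : 1 ≤ n)
    (F : Type) [Field F] [Fintype F] (hF : Fintype.card F = q) :
    ∃ I : Submodule F (MvPolynomial (Fin n) F),
      (∀ P : MvPolynomial (Fin n) F,
        P ∈ I ↔ (∀ i : Fin n, P.degreeOf i < q) ∧
          ∀ a : Fin n → F,
            eval (fun k : Fin n => eval a (esymm (Fin n) F ((k : ℕ) + 1))) P = 0) ∧
      Module.finrank F I = q ^ n - (n + q - 1).choose n :=
  stmt3_general q n F hF
end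

section
/- Let q be a prime power, F_q a finite field with q elements equipped with a fixed linear order, and n ≥ 1. Let M(q,n) be the matrix whose rows are indexed by weakly monotone increasing tuples ι ∈ F_q^n, whose columns are indexed by exponent vectors α = (α_1,...,α_n) with 0 ≤ α_i < q, and whose (ι, α) entry is e_1(ι)^{α_1} · e_2(ι)^{α_2} ··· e_n(ι)^{α_n}. Then M(q,n) has maximal rank, equal to the number C(n+q-1, n) of its rows. -/
open MvPolynomial

/-!
Writing `P(ι) = (e_1(ι), …, e_n(ι))`, the row of `M` indexed by `ι` is the row of the full
monomial matrix `V = (x ^ α)` indexed by `P(ι)`. By Vieta, `P(ι)` determines the multiset of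
entries of `ι`, hence the monotone tuple `ι` itself, so `P` is injective. The rows of `V` are
linearly independent: a relation `∑ₓ cₓ x ^ α = 0` for all reduced exponents `α` extends
linearly to `∑ₓ cₓ p(x) = 0` for every polynomial `p` of degree `< q` in each variable, and such
polynomials include the indicator of each point. So the rows of `M` are independent and the rank
is the number of monotone tuples, i.e. of multisets of size `n` in `F_q`.
-/

namespace Multiset

theorem eq_of_esymm_eq_s4 {R : Type*} [CommRing R] [IsDomain R] {s t : Multiset R}
    (hcard : card s = card t) (h : ∀ k < card s, s.esymm (k + 1) = t.esymm (k + 1)) :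
    s = t := by
  have hprod : (s.map fun a => Polynomial.X - Polynomial.C a).prod =
      (t.map fun a => Polynomial.X - Polynomial.C a).prod := by
    rw [prod_X_sub_X_eq_sum_esymm, prod_X_sub_X_eq_sum_esymm, ← hcard]
    refine Finset.sum_congr rfl fun j hj => ?_
    rcases j with _ | k
    · simp only [esymm, powersetCard_zero_left, map_singleton, sum_singleton]
    · rw [h k (by simpa using hj)]
  simpa only [Polynomial.roots_multiset_prod_X_sub_C] using congrArg Polynomial.roots hprod

end Multiset

theorem Monotone.eq_of_univ_val_map_eq {α : Type*} [LinearOrder α] {n : ℕ} {a b : Fin n → α}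
    (ha : Monotone a) (hb : Monotone b)
    (h : Finset.univ.val.map a = Finset.univ.val.map b) : a = b := by
  have hperm : (List.ofFn a).Perm (List.ofFn b) := by
    rwa [← Multiset.coe_eq_coe, ← Fin.univ_val_map, ← Fin.univ_val_map]
  exact List.ofFn_injective (hperm.eq_of_sortedLE ha.sortedLE_ofFn hb.sortedLE_ofFn)

theorem Monotone.eq_of_eval_esymm_eq {R : Type*} [CommRing R] [IsDomain R] [LinearOrder R]
    {n : ℕ} {a b : Fin n → R} (ha : Monotone a) (hb : Monotone b)
    (h : ∀ k : Fin n, eval a (esymm (Fin n) R (k + 1)) = eval b (esymm (Fin n) R (k + 1))) :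
    a = b := by
  refine ha.eq_of_univ_val_map_eq hb (Multiset.eq_of_esymm_eq_s4 (by simp) fun k hk => ?_)
  simp only [Multiset.card_map, Finset.card_val, Finset.card_univ, Fintype.card_fin] at hk
  convert h ⟨k, hk⟩ using 1 <;> exact (aeval_esymm_eq_multiset_esymm ..).symm

theorem Nat.card_monotone_fin (α : Type*) [LinearOrder α] [Fintype α] (n : ℕ) :
    Nat.card {a : Fin n → α // Monotone a} = (Fintype.card α + n - 1).choose n := by
  rw [← Sym.card_sym_eq_choose, ← Nat.card_eq_fintype_card]
  refine Nat.card_eq_of_bijective (fun a => ⟨Finset.univ.val.map a.1, by simp⟩) ⟨?_, ?_⟩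
  · rintro ⟨a, ha⟩ ⟨b, hb⟩ hab
    exact Subtype.ext (ha.eq_of_univ_val_map_eq hb (congrArg Subtype.val hab))
  · rintro ⟨s, hs⟩
    have hlen : (s.sort (· ≤ ·)).length = n := by rw [Multiset.length_sort, hs]
    refine ⟨⟨fun i => (s.sort (· ≤ ·)).get (i.cast hlen.symm), fun i j hij =>
      (Multiset.pairwise_sort s (· ≤ ·)).rel_get_of_le hij⟩, Subtype.ext ?_⟩
    have hofFn : List.ofFn (fun i : Fin n => (s.sort (· ≤ ·)).get (i.cast hlen.symm)) =
        s.sort (· ≤ ·) :=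
      List.ext_get (by simp [hlen]) fun i _ _ => by simp
    simp only [Fin.univ_val_map, hofFn, Multiset.sort_eq]

section RestrictedMonomials

variable {K σ : Type*} [Field K] [Fintype K] [Fintype σ] [DecidableEq σ]

theorem sum_mul_eval_eq_zero_of_mem_restrictDegree {q : ℕ} (hK : Fintype.card K = q)
    {c : (σ → K) → K} (hc : ∀ α : σ → Fin q, ∑ x, c x * ∏ i, x i ^ (α i : ℕ) = 0)
    {p : MvPolynomial σ K} (hp : p ∈ restrictDegree σ K (q - 1)) :
    ∑ x, c x * eval x p = 0 := by
  rw [mem_restrictDegree] at hp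
  have hq : 0 < q := hK ▸ Fintype.card_pos
  calc ∑ x, c x * eval x p
      = ∑ d ∈ p.support, coeff d p * ∑ x, c x * ∏ i, x i ^ d i := by
        simp_rw [eval_eq', Finset.mul_sum, mul_left_comm (c _)]
        exact Finset.sum_comm
    _ = 0 := Finset.sum_eq_zero fun d hd => by
        have := hc fun i => ⟨d i, by have := hp d hd i; omega⟩
        rw [this, mul_zero]

theorem linearIndependent_restricted_monomials {q : ℕ} (hK : Fintype.card K = q) :
    LinearIndependent K fun (x : σ → K) (α : σ → Fin q) => ∏ i, x i ^ (α i : ℕ) := by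
  refine Fintype.linearIndependent_iff.mpr fun c hc x₀ => ?_
  have hc' (α : σ → Fin q) : ∑ x, c x * ∏ i, x i ^ (α i : ℕ) = 0 := by
    simpa [Finset.sum_apply] using congrFun hc α
  have h := sum_mul_eval_eq_zero_of_mem_restrictDegree hK hc'
    (hK ▸ indicator_mem_restrictDegree x₀)
  rwa [Finset.sum_eq_single x₀ (fun x _ hx => by rw [eval_indicator_apply_eq_zero x x₀ hx,
    mul_zero]) (by simp), eval_indicator_apply_eq_one, mul_one] at h

end RestrictedMonomials

theorem stmt4_general (q n : ℕ)
    (F : Type) [Field F] [Fintype F] [LinearOrder F] (hF : Fintype.card F = q)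
    (M : Matrix {a : Fin n → F // Monotone a} (Fin n → Fin q) F)
    (hM : ∀ (ι : {a : Fin n → F // Monotone a}) (α : Fin n → Fin q),
      M ι α = ∏ k : Fin n, (eval ι.1 (esymm (Fin n) F ((k : ℕ) + 1))) ^ (α k : ℕ)) :
    M.rank = (n + q - 1).choose n ∧
      M.rank = Nat.card {a : Fin n → F // Monotone a} := by
  have : Fintype {a : Fin n → F // Monotone a} := Fintype.ofFinite _
  let P (ι : {a : Fin n → F // Monotone a}) (k : Fin n) : F :=
    eval ι.1 (esymm (Fin n) F (k + 1))
  have hP : Function.Injective P := fun a b hab =>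
    Subtype.ext (a.2.eq_of_eval_esymm_eq b.2 (congrFun hab))
  have hMP : M = (fun x α => ∏ k, x k ^ (α k : ℕ)) ∘ P := funext fun ι => funext (hM ι)
  have hM' : LinearIndependent F M := hMP ▸ (linearIndependent_restricted_monomials hF).comp P hP
  have hrank : M.rank = Nat.card {a : Fin n → F // Monotone a} := by
    rw [hM'.rank_matrix, Nat.card_eq_fintype_card]
  refine ⟨?_, hrank⟩
  rw [hrank, Nat.card_monotone_fin, hF, add_comm q]

/-- The matrix whose rows are indexed by weakly monotone increasing tuples `ι ∈ F_q^n`, whose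
columns are indexed by exponent vectors `α` with entries `< q`, and whose `(ι, α)` entry is
`∏ k, e_k(ι) ^ α_k`, has maximal rank `(n + q - 1).choose n`, the number of its rows. -/
theorem stmt4 (q n : ℕ) (hq : IsPrimePow q) (hn : 1 ≤ n)
    (F : Type) [Field F] [Fintype F] [LinearOrder F] (hF : Fintype.card F = q)
    (M : Matrix {a : Fin n → F // Monotone a} (Fin n → Fin q) F)
    (hM : ∀ (ι : {a : Fin n → F // Monotone a}) (α : Fin n → Fin q),
      M ι α = ∏ k : Fin n, (eval ι.1 (esymm (Fin n) F ((k : ℕ) + 1))) ^ (α k : ℕ)) :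
    M.rank = (n + q - 1).choose n ∧
      M.rank = Nat.card {a : Fin n → F // Monotone a} :=
  stmt4_general q n F hF M hM
end

section
/- Let q = p^r be a prime power with p prime, F_q a finite field with q elements, and n ≥ 1. Then the F_q-vector space I(q,n) admits an F_q-basis consisting of polynomials all of whose coefficients lie in the prime subfield F_p of F_q. Equivalently, I(q,n) is spanned over F_q by its elements whose coefficients all lie in F_p. -/
/-!
Let `φ` act on polynomials by raising every coefficient to the `p`-th power. Since Frobenius
permutes `F^n` and commutes with the `e_k`, `φ` maps `I(q, n)` into itself, and Galois descent
applies: for `P ∈ I` and `x ∈ F` the trace `∑_{s<r} φ^s (x P)` lies in `I` and has coefficients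
in `𝔽_p`. If a linear functional `f` killed all these traces but not `P`, then
`x ↦ ∑_{s<r} f (φ^s P) x^(p^s)` would be a nonzero polynomial of degree `< q` vanishing on `F`.
-/

open MvPolynomial

theorem eq_zero_of_forall_sum_mul_pow_pow_eq_zero {F : Type*} [Field F] [Fintype F] {p r : ℕ}
    (hp : 1 < p) (hF : Fintype.card F = p ^ r) (c : ℕ → F)
    (h : ∀ x : F, ∑ s ∈ Finset.range r, c s * x ^ p ^ s = 0) {t : ℕ} (ht : t < r) :
    c t = 0 := by
  set g : Polynomial F := ∑ s ∈ Finset.range r, Polynomial.C (c s) * Polynomial.X ^ p ^ s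
  have hdeg : g.natDegree < Fintype.card F := by
    rw [hF]
    refine (Polynomial.natDegree_sum_le_of_forall_le _ _ fun s hs => ?_).trans_lt
      (Nat.pow_lt_pow_right hp (Nat.sub_one_lt_of_lt ht))
    refine (Polynomial.natDegree_C_mul_le _ _).trans ?_
    rw [Polynomial.natDegree_X_pow]
    exact Nat.pow_le_pow_right (by omega) (Nat.le_sub_one_of_lt (Finset.mem_range.1 hs))
  have hg : g = 0 := Polynomial.eq_zero_of_natDegree_lt_card_of_eval_eq_zero g
    Function.injective_id (fun x => by simpa [g, Polynomial.eval_finsetSum] using h x) hdeg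
  have hinj := Nat.pow_right_injective hp
  have := congrArg (Polynomial.coeff · (p ^ t)) hg
  simp only [g, Polynomial.finsetSum_coeff, Polynomial.coeff_C_mul, Polynomial.coeff_X_pow,
    Polynomial.coeff_zero] at this
  rwa [Finset.sum_eq_single t (fun s _ hst => by simp [hinj.ne_iff.2 hst.symm])
    (fun h => absurd (Finset.mem_range.2 ht) h), if_pos rfl, mul_one] at this

section PrimeField

variable {F : Type*} [Field F] {p r : ℕ} [Fact p.Prime] [CharP F p]

theorem mem_range_castHom_of_pow_char_eq_self {z : F} (hz : z ^ p = z) :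
    z ∈ Set.range (ZMod.castHom (dvd_refl p) F) := by
  rw [← RingHom.coe_fieldRange, ZMod.fieldRange_castHom_eq_bot]
  exact (Subfield.mem_bot_iff_pow_eq_self F p).2 hz

theorem sum_pow_pow_mem_range_castHom [Fintype F] (hF : Fintype.card F = p ^ r) (y : F) :
    ∑ s ∈ Finset.range r, y ^ p ^ s ∈ Set.range (ZMod.castHom (dvd_refl p) F) := by
  refine mem_range_castHom_of_pow_char_eq_self ?_
  have hyr : y ^ p ^ r = y := hF ▸ FiniteField.pow_card y
  calc (∑ s ∈ Finset.range r, y ^ p ^ s) ^ p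
      = ∑ s ∈ Finset.range r, y ^ p ^ (s + 1) := by
        rw [sum_pow_char]
        exact Finset.sum_congr rfl fun s _ => by rw [← pow_mul, pow_succ]
    _ = ∑ s ∈ Finset.range r, y ^ p ^ s := by
        have := (Finset.sum_range_succ (fun s => y ^ p ^ s) r).symm.trans
          (Finset.sum_range_succ' (fun s => y ^ p ^ s) r)
        rw [hyr, pow_zero, pow_one] at this
        exact (add_right_cancel this).symm

end PrimeField

noncomputable def frobeniusTrace {σ R : Type*} [CommSemiring R] (p : ℕ) [ExpChar R p] (r : ℕ)
    (P : MvPolynomial σ R) : MvPolynomial σ R :=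
  ∑ s ∈ Finset.range r, map (iterateFrobenius R p s) P

section FrobeniusTrace

variable {σ R : Type*} [CommSemiring R] {p r : ℕ} [ExpChar R p]

theorem coeff_frobeniusTrace (P : MvPolynomial σ R) (m : σ →₀ ℕ) :
    (frobeniusTrace p r P).coeff m = ∑ s ∈ Finset.range r, P.coeff m ^ p ^ s := by
  simp [frobeniusTrace, coeff_sum, coeff_map, iterateFrobenius_def]

theorem frobeniusTrace_C_mul (x : R) (P : MvPolynomial σ R) :
    frobeniusTrace p r (C x * P) =
      ∑ s ∈ Finset.range r, x ^ p ^ s • map (iterateFrobenius R p s) P := by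
  simp only [frobeniusTrace, map_mul, map_C, smul_eq_C_mul, iterateFrobenius_def, map_pow]

theorem map_iterateFrobenius_mem {W : Submodule R (MvPolynomial σ R)}
    (hW : ∀ P ∈ W, map (frobenius R p) P ∈ W) {P : MvPolynomial σ R} (hP : P ∈ W) (s : ℕ) :
    map (iterateFrobenius R p s) P ∈ W := by
  induction s with
  | zero => rwa [iterateFrobenius_zero, map_id]
  | succ s ih =>
    rw [add_comm, iterateFrobenius_add, iterateFrobenius_one, ← map_map]
    exact hW _ ih

theorem frobeniusTrace_mem {W : Submodule R (MvPolynomial σ R)}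
    (hW : ∀ P ∈ W, map (frobenius R p) P ∈ W) {P : MvPolynomial σ R} (hP : P ∈ W) :
    frobeniusTrace p r P ∈ W :=
  W.sum_mem fun s _ => map_iterateFrobenius_mem hW hP s

end FrobeniusTrace

theorem mem_span_rational_of_map_frobenius_mem {σ F : Type*} [Field F] [Fintype F] {p r : ℕ}
    [Fact p.Prime] [CharP F p] (hF : Fintype.card F = p ^ r) {W : Submodule F (MvPolynomial σ F)}
    (hW : ∀ P ∈ W, map (frobenius F p) P ∈ W) {P : MvPolynomial σ F} (hP : P ∈ W) :
    P ∈ Submodule.span F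
      {Q | Q ∈ W ∧ ∀ m, Q.coeff m ∈ Set.range (ZMod.castHom (dvd_refl p) F)} := by
  by_contra hPS
  obtain ⟨f, hfP, hfS⟩ :=
    Submodule.exists_dual_map_eq_bot_of_notMem hPS (Module.Projective.of_free (R := F))
  have hf : ∀ x : F, ∑ s ∈ Finset.range r, f (map (iterateFrobenius F p s) P) * x ^ p ^ s = 0 := by
    intro x
    have hxP : C x * P ∈ W := smul_eq_C_mul P x ▸ W.smul_mem x hP
    have htrace : f (frobeniusTrace p r (C x * P)) = 0 :=
      (Submodule.eq_bot_iff _).1 hfS _ <| Submodule.mem_map_of_mem <| Submodule.subset_span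
        ⟨frobeniusTrace_mem hW hxP, fun m => coeff_frobeniusTrace (p := p) (C x * P) m ▸
          sum_pow_pow_mem_range_castHom hF _⟩
    rw [frobeniusTrace_C_mul, map_sum] at htrace
    simpa only [map_smul, smul_eq_mul, mul_comm] using htrace
  have hr : 0 < r := by
    refine Nat.pos_of_ne_zero fun hr => ?_
    have := Fintype.one_lt_card (α := F)
    simp_all
  exact hfP (by simpa [map_id] using
    eq_zero_of_forall_sum_mul_pow_pow_eq_zero (Fact.out : p.Prime).one_lt hF _ hf hr)

theorem MvPolynomial.eval_comp_map {σ R S : Type*} [CommSemiring R] [CommSemiring S]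
    (f : R →+* S) (x : σ → R) (P : MvPolynomial σ R) :
    eval (f ∘ x) (map f P) = f (eval x P) := by
  rw [eval_map, eval₂_comp]

theorem MvPolynomial.degreeOf_map_of_injective {σ R S : Type*} [CommSemiring R] [CommSemiring S]
    {f : R →+* S} (hf : Function.Injective f) (P : MvPolynomial σ R) (i : σ) :
    (map f P).degreeOf i = P.degreeOf i := by
  simp only [degreeOf, degrees_map_of_injective _ hf]

/-- `I(q, n)` for `F = 𝔽_q`; the variable `k : Fin n` stands for `e_{k+1}`. -/
def esymmRelations (n : ℕ) (F : Type*) [Field F] [Fintype F] :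
    Submodule F (MvPolynomial (Fin n) F) where
  carrier := {P | (∀ i : Fin n, P.degreeOf i < Fintype.card F) ∧ ∀ a : Fin n → F,
    eval (fun k : Fin n => eval a (esymm (Fin n) F ((k : ℕ) + 1))) P = 0}
  add_mem' := fun ⟨hPdeg, hPeval⟩ ⟨hQdeg, hQeval⟩ =>
    ⟨fun i => (degreeOf_add_le i _ _).trans_lt (max_lt (hPdeg i) (hQdeg i)),
      fun a => by rw [map_add, hPeval, hQeval, add_zero]⟩
  zero_mem' := ⟨fun i => (degreeOf_zero i).trans_lt Fintype.card_pos, fun _ => map_zero _⟩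
  smul_mem' := fun c P ⟨hPdeg, hPeval⟩ =>
    ⟨fun i => (smul_eq_C_mul P c ▸ degreeOf_C_mul_le P i c).trans_lt (hPdeg i),
      fun a => by rw [smul_eval, hPeval, mul_zero]⟩

theorem map_mem_esymmRelations {n : ℕ} {F : Type*} [Field F] [Fintype F] {τ : F →+* F}
    (hτ : Function.Surjective τ) {P : MvPolynomial (Fin n) F} (hP : P ∈ esymmRelations n F) :
    map τ P ∈ esymmRelations n F := by
  obtain ⟨hPdeg, hPeval⟩ := hP
  refine ⟨fun i => degreeOf_map_of_injective τ.injective P i ▸ hPdeg i, fun a => ?_⟩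
  obtain ⟨a, rfl⟩ := hτ.comp_left a
  have hesymm : (fun k : Fin n => eval (τ ∘ a) (esymm (Fin n) F ((k : ℕ) + 1))) =
      τ ∘ fun k : Fin n => eval a (esymm (Fin n) F ((k : ℕ) + 1)) :=
    funext fun k => by rw [← map_esymm (σ := Fin n) (f := τ), eval_comp_map, Function.comp_apply]
  rw [hesymm, eval_comp_map, hPeval, map_zero]

theorem stmt10_general (p r n : ℕ)
    (F : Type) [Field F] [Fintype F] [CharP F p] (hF : Fintype.card F = p ^ r)
    (P : MvPolynomial (Fin n) F)
    (hP : (∀ i : Fin n, P.degreeOf i < p ^ r) ∧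
      ∀ a : Fin n → F,
        eval (fun k : Fin n => eval a (esymm (Fin n) F ((k : ℕ) + 1))) P = 0) :
    P ∈ Submodule.span F {Q : MvPolynomial (Fin n) F |
      ((∀ i : Fin n, Q.degreeOf i < p ^ r) ∧
        ∀ a : Fin n → F,
          eval (fun k : Fin n => eval a (esymm (Fin n) F ((k : ℕ) + 1))) Q = 0) ∧
      ∀ m : Fin n →₀ ℕ, Q.coeff m ∈ Set.range (ZMod.castHom (dvd_refl p) F)} := by
  have : Fact p.Prime := ⟨CharP.char_is_prime F p⟩
  have hfrob : ∀ Q ∈ esymmRelations n F, map (frobenius F p) Q ∈ esymmRelations n F :=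
    fun _ => map_mem_esymmRelations (Finite.surjective_of_injective (frobenius_inj F p))
  rw [← hF] at hP ⊢
  exact mem_span_rational_of_map_frobenius_mem hF hfrob hP

/-- The space `I(q,n)` of algebraic relations among the elementary symmetric polynomial
functions over `F_q` (`q = p ^ r`) is spanned over `F_q` by its elements all of whose
coefficients lie in the prime subfield `F_p` (the image of `ZMod p` in `F_q`). Hence it
admits a basis with coefficients in `F_p`. -/
theorem stmt10 (p r n : ℕ) (hp : p.Prime) (hr : 1 ≤ r) (hn : 1 ≤ n)
    (F : Type) [Field F] [Fintype F] [CharP F p] (hF : Fintype.card F = p ^ r)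
    (P : MvPolynomial (Fin n) F)
    (hP : (∀ i : Fin n, P.degreeOf i < p ^ r) ∧
      ∀ a : Fin n → F,
        eval (fun k : Fin n => eval a (esymm (Fin n) F ((k : ℕ) + 1))) P = 0) :
    P ∈ Submodule.span F {Q : MvPolynomial (Fin n) F |
      ((∀ i : Fin n, Q.degreeOf i < p ^ r) ∧
        ∀ a : Fin n → F,
          eval (fun k : Fin n => eval a (esymm (Fin n) F ((k : ℕ) + 1))) Q = 0) ∧
      ∀ m : Fin n →₀ ℕ, Q.coeff m ∈ Set.range (ZMod.castHom (dvd_refl p) F)} :=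
  stmt10_general p r n F hF P hP
end

section
/- Let q be a prime power, F_q a finite field with q elements, and n ≥ 1. Let H ∈ F_q[X_1,...,X_n] be a symmetric polynomial in which every variable occurs with degree strictly less than q. Then there exists a polynomial F ∈ F_q[E_1,...,E_n], in which every variable occurs with degree strictly less than q, such that H = F(e_1(X_1,...,X_n), ..., e_n(X_1,...,X_n)). -/
/-!
Run the classical leading-term algorithm for symmetric polynomials in the lexicographic
order, while tracking degrees. The leading exponent `s` of a symmetric polynomial is antitone,
so its largest entry is `s₀`, and it is the leading exponent of `e₁ ^ (s₀ - s₁) ⋯ eₙ ^ sₙ`, a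
monomial in the `eₖ` whose exponents are all at most `s₀`. Subtracting it lowers the leading
exponent, hence cannot raise its first entry, so every monomial in the `eₖ` produced along the
way has exponents at most `s₀ ≤ degreeOf 0 H < q`.
-/

open MvPolynomial AddMonoidAlgebra Fin

theorem Finsupp.Lex.monotone_apply_of_forall_le {α N : Type*} [LinearOrder α] [Zero N]
    [LinearOrder N] {i : α} (hi : ∀ j, i ≤ j) :
    Monotone fun a : Lex (α →₀ N) => ofLex a i := by
  intro a b h
  rcases h.eq_or_lt.imp id Finsupp.Lex.lt_iff.mp with rfl | ⟨j, hj, hlt⟩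
  · exact le_rfl
  · obtain rfl | hne := eq_or_ne j i
    · exact hlt.le
    · exact (hj i ((hi j).lt_of_ne' hne)).le

namespace MvPolynomial

variable {R : Type*} [CommRing R] {n : ℕ}

/-- For symmetric `p` with leading exponent `s`, the exponent `tₖ = sₖ - sₖ₊₁` for which
`e₁ ^ t₁ ⋯ eₙ ^ tₙ` has leading exponent `s`. -/
noncomputable def esymmLeadingExponent (p : MvPolynomial (Fin n) R) : Fin n →₀ ℕ :=
  Finsupp.equivFunOnFinite.symm (invAccumulate n n ⇑(ofLex (p.supDegree toLex)))

theorem esymmLeadingExponent_apply_le (p : MvPolynomial (Fin n) R) (k : Fin n) :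
    esymmLeadingExponent p k ≤ ofLex (p.supDegree toLex) k := by
  change invAccumulate n n _ k ≤ _
  rw [invAccumulate, dif_pos k.2]
  exact Nat.sub_le _ _

theorem IsSymmetric.supDegree_esymmAlgHomMonomial_esymmLeadingExponent
    {p : MvPolynomial (Fin n) R} (hp : p.IsSymmetric) (h0 : p ≠ 0) :
    (esymmAlgHomMonomial (Fin n) (esymmLeadingExponent p) (p.leadingCoeff toLex)).supDegree toLex
      = p.supDegree toLex := by
  rw [← ofLex_inj, DFunLike.ext'_iff, supDegree_esymmAlgHomMonomial _ _ le_rfl]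
  · exact accumulate_invAccumulate le_rfl hp.antitone_supDegree
  · rwa [Ne, leadingCoeff_eq_zero toLex.injective]

theorem IsSymmetric.supDegree_sub_esymmAlgHomMonomial_lt {p : MvPolynomial (Fin n) R}
    (hp : p.IsSymmetric) (h0 : p ≠ 0)
    (hne : p ≠ esymmAlgHomMonomial (Fin n) (esymmLeadingExponent p) (p.leadingCoeff toLex)) :
    (p - esymmAlgHomMonomial (Fin n) (esymmLeadingExponent p) (p.leadingCoeff toLex)).supDegree
      toLex < p.supDegree toLex :=
  (supDegree_sub_lt_of_leadingCoeff_eq toLex.injective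
    (hp.supDegree_esymmAlgHomMonomial_esymmLeadingExponent h0).symm
    (leadingCoeff_esymmAlgHomMonomial _ le_rfl).symm).resolve_right hne

theorem IsSymmetric.ofLex_supDegree_le_of_supDegree_le {p p' : MvPolynomial (Fin n) R}
    (hp' : p'.IsSymmetric) (hle : p'.supDegree toLex ≤ p.supDegree toLex) {d : ℕ}
    (hd : ∀ i, ofLex (p.supDegree toLex) i ≤ d) (i : Fin n) :
    ofLex (p'.supDegree toLex) i ≤ d :=
  calc ofLex (p'.supDegree toLex) i
      ≤ ofLex (p'.supDegree toLex) ⟨0, i.pos⟩ := hp'.antitone_supDegree (Nat.zero_le _)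
    _ ≤ ofLex (p.supDegree toLex) ⟨0, i.pos⟩ :=
        Finsupp.Lex.monotone_apply_of_forall_le (fun j : Fin n => Nat.zero_le j) hle
    _ ≤ d := hd _

theorem ofLex_supDegree_le_degreeOf (p : MvPolynomial (Fin n) R) (i : Fin n) :
    ofLex (p.supDegree toLex) i ≤ p.degreeOf i := by
  obtain rfl | h0 := eq_or_ne p 0
  · simp [bot_eq_zero]
  obtain ⟨a, ha, he⟩ := exists_supDegree_mem_support toLex h0
  rw [he, ofLex_toLex]
  exact monomial_le_degreeOf i ha

theorem IsSymmetric.exists_degreeOf_le_esymmAlgHom_eq_of_supDegree_le {d : ℕ}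
    {p : MvPolynomial (Fin n) R} (hp : p.IsSymmetric)
    (hd : ∀ i, ofLex (p.supDegree toLex) i ≤ d) :
    ∃ P : MvPolynomial (Fin n) R,
      (∀ i, P.degreeOf i ≤ d) ∧ (esymmAlgHom (Fin n) R n P).val = p := by
  induction hs : p.supDegree toLex using WellFoundedLT.induction generalizing p with
  | _ s ih =>
  subst hs
  obtain rfl | h0 := eq_or_ne p 0
  · exact ⟨0, fun _ => by simp, by simp⟩
  set t := esymmLeadingExponent p
  set c := p.leadingCoeff toLex
  have hc : c ≠ 0 := by rwa [Ne, leadingCoeff_eq_zero toLex.injective]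
  have hdeg_monomial (i : Fin n) : (monomial t c).degreeOf i ≤ d := by
    rw [degreeOf_monomial_eq _ _ hc]
    exact (esymmLeadingExponent_apply_le p i).trans (hd i)
  obtain he | hne := eq_or_ne p (esymmAlgHomMonomial (Fin n) t c)
  · exact ⟨monomial t c, hdeg_monomial, he.symm⟩
  have hlt := hp.supDegree_sub_esymmAlgHomMonomial_lt h0 hne
  have hsym := hp.sub (isSymmetric_esymmAlgHomMonomial (σ := Fin n) t c)
  obtain ⟨P, hP, hPp⟩ := ih _ hlt hsym (hsym.ofLex_supDegree_le_of_supDegree_le hlt.le hd) rfl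
  refine ⟨P + monomial t c,
    fun i => (degreeOf_add_le _ _ _).trans (max_le (hP i) (hdeg_monomial i)), ?_⟩
  rw [map_add, Subalgebra.coe_add, hPp, ← esymmAlgHomMonomial, sub_add_cancel]

theorem IsSymmetric.exists_degreeOf_le_esymmAlgHom_eq {d : ℕ} {p : MvPolynomial (Fin n) R}
    (hp : p.IsSymmetric) (hd : ∀ i, p.degreeOf i ≤ d) :
    ∃ P : MvPolynomial (Fin n) R,
      (∀ i, P.degreeOf i ≤ d) ∧ (esymmAlgHom (Fin n) R n P).val = p :=
  hp.exists_degreeOf_le_esymmAlgHom_eq_of_supDegree_le fun i =>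
    (ofLex_supDegree_le_degreeOf p i).trans (hd i)

end MvPolynomial

theorem stmt13_general (q n : ℕ) (F : Type) [Field F]
    (H : MvPolynomial (Fin n) F) (hsym : H.IsSymmetric)
    (hdeg : ∀ i : Fin n, H.degreeOf i < q) :
    ∃ P : MvPolynomial (Fin n) F,
      (∀ i : Fin n, P.degreeOf i < q) ∧
      H = bind₁ (fun k : Fin n => esymm (Fin n) F ((k : ℕ) + 1)) P := by
  obtain ⟨P, hP, hPH⟩ :=
    hsym.exists_degreeOf_le_esymmAlgHom_eq (d := q - 1) fun i => Nat.le_sub_one_of_lt (hdeg i)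
  refine ⟨P, fun i => (hP i).trans_lt (Nat.sub_one_lt_of_lt (hdeg i)), ?_⟩
  rw [← hPH, esymmAlgHom_apply]
  rfl

/-- Every symmetric polynomial `H ∈ F_q[X_1,...,X_n]` with all variable degrees `< q` can be
written as `P(e_1,...,e_n)` for a polynomial `P` with all variable degrees `< q`. -/
theorem stmt13 (q n : ℕ) (hq : IsPrimePow q) (hn : 1 ≤ n)
    (F : Type) [Field F] [Fintype F] (hF : Fintype.card F = q)
    (H : MvPolynomial (Fin n) F) (hsym : H.IsSymmetric)
    (hdeg : ∀ i : Fin n, H.degreeOf i < q) :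
    ∃ P : MvPolynomial (Fin n) F,
      (∀ i : Fin n, P.degreeOf i < q) ∧
      H = bind₁ (fun k : Fin n => esymm (Fin n) F ((k : ℕ) + 1)) P :=
  stmt13_general q n F H hsym hdeg
end
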